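/- Fix integers 1 ≤ k < n and let a = (1/2)·diag(i I_k, −i I_{n−k}) ∈ u(n). Let g : ℝ² → U(n) be smooth such that u := g⁻¹ ∂_x g takes values in the set of skew-Hermitian matrices of block form [[0, q],[−q*, 0]] (q a k×(n−k) complex matrix), and such that g⁻¹ ∂_t g = [a, ∂_x u] − (1/2)[u, [a, u]]. Then the curve γ := g a g⁻¹ on the adjoint U(n)-orbit of a satisfies the Schrödinger flow equation ∂_t γ = [γ, ∂_x² γ]. -/

import Mathlib

open Matrix
open scoped ContDiff

attribute [local instance] Matrix.frobeniusNormedAddCommGroup Matrix.frobeniusNormedSpace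

attribute [local instance] Matrix.frobeniusNormedRing Matrix.frobeniusNormedAlgebra

private noncomputable def starCLM (n : ℕ) :
    Matrix (Fin n) (Fin n) ℂ →L[ℝ] Matrix (Fin n) (Fin n) ℂ :=
  LinearMap.toContinuousLinearMap
    { toFun := star
      map_add' := star_add
      map_smul' := fun r A => by
        show star (r • A) = r • star A
        rw [star_smul, star_trivial] }

private lemma starCLM_apply {n : ℕ} (A : Matrix (Fin n) (Fin n) ℂ) : starCLM n A = star A := rfl

private noncomputable def entryCLM (n : ℕ) (p r : Fin n) :
    Matrix (Fin n) (Fin n) ℂ →L[ℝ] ℂ :=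
  LinearMap.toContinuousLinearMap
    { toFun := fun A => A p r
      map_add' := fun _ _ => rfl
      map_smul' := fun _ _ => rfl }

private lemma aux_fst {n : ℕ} (F : ℝ × ℝ → Matrix (Fin n) (Fin n) ℂ)
    (hF : Differentiable ℝ F) (x t : ℝ) :
    HasDerivAt (fun s => F (s, t)) (fderiv ℝ F (x, t) (1, 0)) x := by
  have h1 : HasDerivAt (fun s : ℝ => (s, t)) ((1 : ℝ), (0 : ℝ)) x :=
    HasDerivAt.prodMk (hasDerivAt_id x) (hasDerivAt_const x t)
  exact (hF (x, t)).hasFDerivAt.comp_hasDerivAt x h1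

private lemma aux_snd {n : ℕ} (F : ℝ × ℝ → Matrix (Fin n) (Fin n) ℂ)
    (hF : Differentiable ℝ F) (x t : ℝ) :
    HasDerivAt (fun s => F (x, s)) (fderiv ℝ F (x, t) (0, 1)) t := by
  have h1 : HasDerivAt (fun s : ℝ => (x, s)) ((0 : ℝ), (1 : ℝ)) t :=
    HasDerivAt.prodMk (hasDerivAt_const t x) (hasDerivAt_id t)
  exact (hF (x, t)).hasFDerivAt.comp_hasDerivAt t h1

private lemma key_alg {n : ℕ} (a u v : Matrix (Fin n) (Fin n) ℂ)
    (hua : u * a = -(a * u)) (hva : v * a = -(a * v))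
    (ha2 : a * a = -((1 / 4 : ℂ) • (1 : Matrix (Fin n) (Fin n) ℂ))) :
    ((a * v - v * a) - (1 / 2 : ℂ) • (u * (a * u - u * a) - (a * u - u * a) * u)) * a
      - a * ((a * v - v * a) - (1 / 2 : ℂ) • (u * (a * u - u * a) - (a * u - u * a) * u))
    = a * (u * (u * a - a * u) + (v * a - a * v) - (u * a - a * u) * u)
      - (u * (u * a - a * u) + (v * a - a * v) - (u * a - a * u) * u) * a := by
  have hua2 : ∀ x, u * (a * x) = -(a * (u * x)) := fun x => by
    rw [← mul_assoc, hua, neg_mul, mul_assoc]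
  have hva2 : ∀ x, v * (a * x) = -(a * (v * x)) := fun x => by
    rw [← mul_assoc, hva, neg_mul, mul_assoc]
  have ha22 : ∀ x, a * (a * x) = -((1 / 4 : ℂ) • x) := fun x => by
    rw [← mul_assoc, ha2]; simp [smul_mul_assoc]
  simp only [sub_mul, mul_sub, add_mul, mul_add, smul_mul_assoc, mul_smul_comm,
    mul_assoc, hua, hva, hua2, hva2, ha22, ha2, mul_neg, neg_mul, neg_neg, smul_neg,
    mul_one, one_mul, smul_smul]
  module

private lemma anticomm {n k : ℕ} (a : Matrix (Fin n) (Fin n) ℂ)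
    (ha : a = Matrix.diagonal fun p : Fin n =>
      if (p : ℕ) < k then Complex.I / 2 else -(Complex.I / 2))
    (m : Matrix (Fin n) (Fin n) ℂ)
    (hm : ∀ p r : Fin n, (((p : ℕ) < k) ↔ ((r : ℕ) < k)) → m p r = 0) :
    m * a = -(a * m) := by
  subst ha
  ext p r
  rw [Matrix.mul_diagonal, Matrix.neg_apply, Matrix.diagonal_mul]
  by_cases hp : (p : ℕ) < k <;> by_cases hr : (r : ℕ) < k
  · rw [hm p r (by tauto)]; ring
  · simp only [hp, hr, if_true, if_false]; ring
  · simp only [hp, hr, if_true, if_false]; ring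
  · rw [hm p r (by tauto)]; ring

private lemma a_sq {n k : ℕ} (a : Matrix (Fin n) (Fin n) ℂ)
    (ha : a = Matrix.diagonal fun p : Fin n =>
      if (p : ℕ) < k then Complex.I / 2 else -(Complex.I / 2)) :
    a * a = -((1 / 4 : ℂ) • (1 : Matrix (Fin n) (Fin n) ℂ)) := by
  subst ha
  rw [Matrix.diagonal_mul_diagonal]
  ext p r
  rcases eq_or_ne p r with h | h
  · subst h
    by_cases hp : (p : ℕ) < k <;>
      simp [hp, Matrix.diagonal_apply_eq, Matrix.one_apply, div_mul_div_comm,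
        Complex.I_mul_I] <;> norm_num
  · simp [Matrix.diagonal_apply_ne _ h, Matrix.one_apply_ne h]

private lemma a_star {n k : ℕ} (a : Matrix (Fin n) (Fin n) ℂ)
    (ha : a = Matrix.diagonal fun p : Fin n =>
      if (p : ℕ) < k then Complex.I / 2 else -(Complex.I / 2)) :
    star a = -a := by
  subst ha
  rw [Matrix.star_eq_conjTranspose, Matrix.diagonal_conjTranspose, Matrix.diagonal_neg]
  ext p r
  rcases eq_or_ne p r with h | h
  · subst h
    by_cases hp : (p : ℕ) < k <;>
      simp [hp, Matrix.diagonal_apply_eq, Pi.star_apply, Complex.star_def, map_div₀,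
        Complex.conj_I, neg_div]
  · simp [Matrix.diagonal_apply_ne _ h]


/-- Fix `1 ≤ k < n` and let `a = (1/2)·diag(i I_k, −i I_{n−k}) ∈ u(n)`.  Let `g : ℝ² → U(n)`
be smooth such that `u := g⁻¹ ∂ₓ g` takes values in the skew-Hermitian matrices of block
form `[[0, q],[−q*, 0]]`, and such that `g⁻¹ ∂ₜ g = [a, ∂ₓ u] − (1/2)[u,[a,u]]`.  Then the
curve `γ := g a g⁻¹` on the adjoint `U(n)`-orbit of `a` satisfies the Schrödinger flow
equation `∂ₜ γ = [γ, ∂ₓ² γ]`. -/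
theorem stmt_3 (n k : ℕ) (hk : 1 ≤ k) (hkn : k < n)
    (a : Matrix (Fin n) (Fin n) ℂ)
    (ha : a = Matrix.diagonal fun p : Fin n =>
      if (p : ℕ) < k then Complex.I / 2 else -(Complex.I / 2))
    (g : ℝ → ℝ → Matrix (Fin n) (Fin n) ℂ)
    (hg : ContDiff ℝ ∞ (Function.uncurry g))
    (hgu : ∀ x t : ℝ, g x t ∈ Matrix.unitaryGroup (Fin n) ℂ)
    (u : ℝ → ℝ → Matrix (Fin n) (Fin n) ℂ)
    (hu_def : ∀ x t : ℝ, u x t = star (g x t) * deriv (fun s => g s t) x)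
    -- `u` is skew-Hermitian with vanishing diagonal blocks, i.e. of the block form
    -- `[[0, q],[−q*, 0]]` with `q` a `k × (n−k)` complex matrix:
    (hu_skew : ∀ x t : ℝ, star (u x t) = -(u x t))
    (hu_block : ∀ x t : ℝ, ∀ p r : Fin n, (((p : ℕ) < k) ↔ ((r : ℕ) < k)) →
      u x t p r = 0)
    (hgt : ∀ x t : ℝ,
      star (g x t) * deriv (fun s => g x s) t
        = (a * deriv (fun s => u s t) x - deriv (fun s => u s t) x * a)
          - (1 / 2 : ℂ) • (u x t * (a * u x t - u x t * a)
            - (a * u x t - u x t * a) * u x t)) :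
    ∀ x t : ℝ,
      deriv (fun s => g x s * a * star (g x s)) t
        = (g x t * a * star (g x t))
              * deriv (fun s => deriv (fun s' => g s' t * a * star (g s' t)) s) x
          - deriv (fun s => deriv (fun s' => g s' t * a * star (g s' t)) s) x
              * (g x t * a * star (g x t)) := by
  have hle1 : (1 : WithTop ℕ∞) ≤ ∞ := by exact_mod_cast le_top
  have hle2 : (1 : WithTop ℕ∞) + 1 ≤ ∞ := by
    have h : ((1:ℕ∞) : WithTop ℕ∞) + ((1:ℕ∞) : WithTop ℕ∞) ≤ ((⊤:ℕ∞) : WithTop ℕ∞) := by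
      rw [← WithTop.coe_add]
      exact WithTop.coe_le_coe.mpr le_top
    simpa using h
  set G : ℝ × ℝ → Matrix (Fin n) (Fin n) ℂ := Function.uncurry g with hGdef
  have hGd : Differentiable ℝ G := hg.differentiable (by simp)
  set Dx : ℝ × ℝ → Matrix (Fin n) (Fin n) ℂ := fun p => fderiv ℝ G p (1, 0) with hDxdef
  have hgx : ∀ x t : ℝ, HasDerivAt (fun s => g s t) (Dx (x, t)) x := fun x t =>
    aux_fst G hGd x t
  have hu_eq : ∀ x t : ℝ, u x t = star (g x t) * Dx (x, t) := fun x t => by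
    rw [hu_def]; congr 1; exact (hgx x t).deriv
  have hg2 : ∀ x t : ℝ, g x t * star (g x t) = 1 := fun x t =>
    Matrix.mem_unitaryGroup_iff.mp (hgu x t)
  have hg2' : ∀ x t : ℝ, star (g x t) * g x t = 1 := fun x t =>
    Matrix.mem_unitaryGroup_iff'.mp (hgu x t)
  have hDx_eq : ∀ x t : ℝ, Dx (x, t) = g x t * u x t := fun x t => by
    rw [hu_eq, ← mul_assoc, hg2, one_mul]
  have F1 : ∀ x t : ℝ, HasDerivAt (fun s => g s t) (g x t * u x t) x := fun x t =>
    hDx_eq x t ▸ hgx x t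
  have F2 : ∀ x t : ℝ, HasDerivAt (fun s => star (g s t)) (-(u x t * star (g x t))) x := by
    intro x t
    have h := (starCLM n).hasFDerivAt.comp_hasDerivAt x (F1 x t)
    have e : starCLM n (g x t * u x t) = -(u x t * star (g x t)) := by
      rw [starCLM_apply, Matrix.star_mul, hu_skew, neg_mul]
    exact e ▸ h
  -- smoothness of u as a two-variable function
  have hDxC : ContDiff ℝ 1 Dx := (hg.fderiv_right hle2).clm_apply contDiff_const
  set U : ℝ × ℝ → Matrix (Fin n) (Fin n) ℂ := fun p => star (G p) * Dx p with hUdef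
  have hUC : ContDiff ℝ 1 U :=
    (((starCLM n).contDiff).comp (hg.of_le hle1)).mul hDxC
  have hUd : Differentiable ℝ U := hUC.differentiable one_ne_zero
  have hu_eq' : ∀ x t : ℝ, u x t = U (x, t) := fun x t => hu_eq x t
  set Ux : ℝ × ℝ → Matrix (Fin n) (Fin n) ℂ := fun p => fderiv ℝ U p (1, 0) with hUxdef
  have Fu : ∀ x t : ℝ, HasDerivAt (fun s => u s t) (Ux (x, t)) x := by
    intro x t
    have h := aux_fst U hUd x t
    have hfun : (fun s => U (s, t)) = fun s => u s t := funext fun s => (hu_eq' s t).symm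
    rw [hfun] at h; exact h
  have hv_skew : ∀ x t : ℝ, star (Ux (x, t)) = -(Ux (x, t)) := by
    intro x t
    have h1 := (starCLM n).hasFDerivAt.comp_hasDerivAt x (Fu x t)
    have h2 : HasDerivAt (fun s => star (u s t)) (-(Ux (x, t))) x := by
      have hfun : (fun s => star (u s t)) = fun s => -(u s t) := funext fun s => hu_skew s t
      rw [hfun]; exact (Fu x t).neg
    exact (h2.unique h1).symm
  have hv_block : ∀ x t : ℝ, ∀ p r : Fin n, (((p : ℕ) < k) ↔ ((r : ℕ) < k)) →
      Ux (x, t) p r = 0 := by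
    intro x t p r hpr
    have h1 := (entryCLM n p r).hasFDerivAt.comp_hasDerivAt x (Fu x t)
    have h2 : HasDerivAt (fun s => u s t p r) (0 : ℂ) x := by
      have hfun : (fun s => u s t p r) = fun _ => (0 : ℂ) :=
        funext fun s => hu_block s t p r hpr
      rw [hfun]; exact hasDerivAt_const x 0
    exact (h2.unique h1).symm
  have hua : ∀ x t : ℝ, u x t * a = -(a * u x t) := fun x t =>
    anticomm a ha _ (hu_block x t)
  have hva : ∀ x t : ℝ, Ux (x, t) * a = -(a * Ux (x, t)) := fun x t =>
    anticomm a ha _ (hv_block x t)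
  have ha2 := a_sq a ha
  have hsa := a_star a ha
  have F3 : ∀ x t : ℝ, HasDerivAt (fun s => g s t * a * star (g s t))
      (g x t * (u x t * a - a * u x t) * star (g x t)) x := by
    intro x t
    have h := ((F1 x t).mul_const a).mul (F2 x t)
    convert h using 1
    all_goals first | rfl | noncomm_ring
  have F4 : ∀ x t : ℝ, HasDerivAt (fun s => g s t * (u s t * a - a * u s t) * star (g s t))
      (g x t * (u x t * (u x t * a - a * u x t) + (Ux (x, t) * a - a * Ux (x, t))
        - (u x t * a - a * u x t) * u x t) * star (g x t)) x := by
    intro x t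
    have hc : HasDerivAt (fun s => u s t * a - a * u s t)
        (Ux (x, t) * a - a * Ux (x, t)) x :=
      ((Fu x t).mul_const a).sub (HasDerivAt.const_mul a (Fu x t))
    have h := ((F1 x t).mul hc).mul (F2 x t)
    convert h using 1
    all_goals first | rfl | (simp only [Pi.mul_apply]; noncomm_ring)
  -- time direction
  set h0 : ℝ → ℝ → Matrix (Fin n) (Fin n) ℂ := fun x t =>
    (a * Ux (x, t) - Ux (x, t) * a)
      - (1 / 2 : ℂ) • (u x t * (a * u x t - u x t * a)
        - (a * u x t - u x t * a) * u x t) with hh0def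
  have hgt' : ∀ x t : ℝ, star (g x t) * deriv (fun s => g x s) t = h0 x t := fun x t => by
    rw [hgt x t, show deriv (fun s => u s t) x = Ux (x, t) from (Fu x t).deriv]
  have F5 : ∀ x t : ℝ, HasDerivAt (fun s => g x s) (g x t * h0 x t) t := by
    intro x t
    have hD := aux_snd G hGd x t
    have hDd : deriv (fun s => g x s) t = fderiv ℝ G (x, t) (0, 1) := hD.deriv
    have e0 : star (g x t) * fderiv ℝ G (x, t) (0, 1) = h0 x t := by
      rw [← hDd]; exact hgt' x t
    have e1 : fderiv ℝ G (x, t) (0, 1) = g x t * h0 x t := by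
      rw [← e0, ← mul_assoc, hg2 x t, one_mul]
    exact e1 ▸ hD
  have hsh : ∀ x t : ℝ, star (h0 x t) = -(h0 x t) := by
    intro x t
    simp only [hh0def, star_sub, star_smul, Matrix.star_mul, hu_skew, hv_skew, hsa,
      star_div₀, star_one, star_ofNat, neg_mul, mul_neg, neg_neg, neg_sub]
    noncomm_ring
    module
  have F6 : ∀ x t : ℝ, HasDerivAt (fun s => star (g x s)) (-(h0 x t * star (g x t))) t := by
    intro x t
    have h := (starCLM n).hasFDerivAt.comp_hasDerivAt t (F5 x t)
    have e : starCLM n (g x t * h0 x t) = -(h0 x t * star (g x t)) := by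
      rw [starCLM_apply, Matrix.star_mul, hsh x t, neg_mul]
    exact e ▸ h
  have F7 : ∀ x t : ℝ, HasDerivAt (fun s => g x s * a * star (g x s))
      (g x t * (h0 x t * a - a * h0 x t) * star (g x t)) t := by
    intro x t
    have h := ((F5 x t).mul_const a).mul (F6 x t)
    convert h using 1
    all_goals first | rfl | noncomm_ring
  intro x t
  have hinner : (fun s => deriv (fun s' => g s' t * a * star (g s' t)) s)
      = fun s => g s t * (u s t * a - a * u s t) * star (g s t) :=
    funext fun s => (F3 s t).deriv
  rw [show deriv (fun s => g x s * a * star (g x s)) t = _ from (F7 x t).deriv, hinner,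
    show deriv (fun s => g s t * (u s t * a - a * u s t) * star (g s t)) x = _ from (F4 x t).deriv]
  have hcollapse : ∀ X Y : Matrix (Fin n) (Fin n) ℂ,
      (g x t * X * star (g x t)) * (g x t * Y * star (g x t))
        = g x t * (X * Y) * star (g x t) := by
    intro X Y
    have h := hg2' x t
    simp only [mul_assoc]
    congr 1
    congr 1
    rw [← mul_assoc, h, one_mul]
  rw [hcollapse, hcollapse, ← sub_mul, ← mul_sub]
  congr 2
  exact key_alg a (u x t) (Ux (x, t)) (hua x t) (hva x t) ha2
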